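/- Let G₁, G₂ be snarks that are cc-incomparable (no cycle-continuous mapping exists in either direction between them). Then for each i ∈ {1,2}, there is no cycle-continuous mapping from the 3-join G₁≡G₂ to Gᵢ. -/

import Mathlib

/-!
The natural map `E(Gᵢ) → E(G₁ ≡ G₂)` (identity off the star of `uᵢ`, the star edges onto the
added matching) is cycle-continuous: every vertex `v ≠ uᵢ` of `Gᵢ` has the same star in the
3-join, so a cycle of the join pulls back to an edge set that is even at every `v ≠ uᵢ`, and by
the handshake lemma then also at `uᵢ`. A cycle-continuous map `G₁ ≡ G₂ → Gᵢ` composed with the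
natural map from the other graph would contradict cc-incomparability.
-/

/-- A finite multigraph: a vertex type, an edge type, and two (arbitrarily ordered)
endpoints for each edge.  Loops (`fst e = snd e`) and parallel edges are allowed. -/
structure Multigraph where
  V : Type
  E : Type
  fst : E → V
  snd : E → V
  [fintypeV : Fintype V]
  [fintypeE : Fintype E]
  [decEqV : DecidableEq V]
  [decEqE : DecidableEq E]

attribute [instance] Multigraph.fintypeV Multigraph.fintypeE Multigraph.decEqV Multigraph.decEqE

namespace Multigraph

/-- The number of times edge `e` is incident with vertex `v` (a loop counts twice). -/
def inc (G : Multigraph) (v : G.V) (e : G.E) : ℕ :=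
  (if G.fst e = v then 1 else 0) + (if G.snd e = v then 1 else 0)

/-- A set of edges is a *cycle* if every vertex is incident with an even number of
its edges (loops counted twice). -/
def IsCycle (G : Multigraph) (C : Finset G.E) : Prop :=
  ∀ v : G.V, Even (∑ e ∈ C, G.inc v e)

/-- The preimage of a finite set of edges under a mapping. -/
def preim {α β : Type} [Fintype α] [DecidableEq β] (f : α → β) (C : Finset β) : Finset α :=
  Finset.univ.filter (fun e => f e ∈ C)

/-- A mapping `f : E(G) → E(H)` is *cycle-continuous* if the preimage of every
cycle of `H` is a cycle of `G`. -/
def CycleContinuous (G H : Multigraph) (f : G.E → H.E) : Prop :=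
  ∀ C : Finset H.E, H.IsCycle C → G.IsCycle (preim f C)

/-- The cut `δ(U)`: edges with exactly one endpoint in `U`. -/
def cutOf (G : Multigraph) (U : Finset G.V) : Finset G.E :=
  Finset.univ.filter (fun e => Xor (G.fst e ∈ U) (G.snd e ∈ U))

/-- A set of edges is a *cut* if it equals `δ(U)` for some vertex set `U`. -/
def IsCut (G : Multigraph) (C : Finset G.E) : Prop :=
  ∃ U : Finset G.V, C = G.cutOf U

/-- The set of edges incident with a vertex `v`. -/
def incidentEdges (G : Multigraph) (v : G.V) : Finset G.E :=
  Finset.univ.filter (fun e => G.fst e = v ∨ G.snd e = v)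

/-- The degree of a vertex (loops counted twice). -/
def degree (G : Multigraph) (v : G.V) : ℕ := ∑ e : G.E, G.inc v e

def Cubic (G : Multigraph) : Prop := ∀ v : G.V, G.degree v = 3

/-- A graph is bridgeless if no cut consists of exactly one edge. -/
def Bridgeless (G : Multigraph) : Prop := ∀ C : Finset G.E, G.IsCut C → C.card ≠ 1

/-- A graph is connected if it has a vertex and every nontrivial vertex set
has a nonempty cut. -/
def Connected (G : Multigraph) : Prop :=
  Nonempty G.V ∧ ∀ U : Finset G.V, U ≠ ∅ → U ≠ Finset.univ → G.cutOf U ≠ ∅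

/-- `K₂³`: the graph with two vertices joined by three parallel edges. -/
def K23 : Multigraph where
  V := Bool
  E := Fin 3
  fst := fun _ => false
  snd := fun _ => true

/-- A snark: a connected cubic bridgeless graph with no cycle-continuous mapping to `K₂³`. -/
def IsSnark (G : Multigraph) : Prop :=
  G.Cubic ∧ G.Connected ∧ G.Bridgeless ∧ ¬ ∃ f : G.E → K23.E, CycleContinuous G K23 f

/-- A proper 3-edge-coloring: distinct edges sharing a vertex get distinct colors. -/
def Proper3EdgeColorable (G : Multigraph) : Prop :=
  ∃ c : G.E → Fin 3, ∀ e e' : G.E, e ≠ e' →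
    (∃ v : G.V, 0 < G.inc v e ∧ 0 < G.inc v e') → c e ≠ c e'

/-- An isomorphism of multigraphs: bijections on vertices and edges preserving
incidence (the two endpoints of an edge may be matched in either order). -/
structure Iso (G H : Multigraph) where
  φ : G.V ≃ H.V
  ε : G.E ≃ H.E
  ends : ∀ e : G.E,
    (φ (G.fst e) = H.fst (ε e) ∧ φ (G.snd e) = H.snd (ε e)) ∨
    (φ (G.fst e) = H.snd (ε e) ∧ φ (G.snd e) = H.fst (ε e))

/-- Edge-transitivity: any edge can be carried to any other by an automorphism. -/
def EdgeTransitive (K : Multigraph) : Prop :=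
  ∀ e₁ e₂ : K.E, ∃ σ : Iso K K, σ.ε e₁ = e₂

/-- Adjacency of vertices. -/
def Adj (G : Multigraph) (u v : G.V) : Prop :=
  ∃ e : G.E, (G.fst e = u ∧ G.snd e = v) ∨ (G.fst e = v ∧ G.snd e = u)

/-- Deleting an edge. -/
def deleteEdge (G : Multigraph) (e : G.E) : Multigraph where
  V := G.V
  E := {e' : G.E // e' ≠ e}
  fst := fun e' => G.fst e'.1
  snd := fun e' => G.snd e'.1

/-- Contracting an edge `e`: its two endpoints are identified (the endpoint `snd e`
is merged into `fst e`), the loop arising from `e` is deleted, all other edges kept. -/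
def contract (G : Multigraph) (e : G.E) : Multigraph where
  V := G.V
  E := {e' : G.E // e' ≠ e}
  fst := fun e' => if G.fst e'.1 = G.snd e then G.fst e else G.fst e'.1
  snd := fun e' => if G.snd e'.1 = G.snd e then G.fst e else G.snd e'.1

/-- The 2-join of `G₁` and `G₂` along edges `e₁`, `e₂`: delete `e₁` and `e₂` and
add two new edges `x₁x₂` (coded `Sum.inr false`) and `y₁y₂` (coded `Sum.inr true`),
where `xᵢ = fst eᵢ` and `yᵢ = snd eᵢ`. -/
def twoJoin (G₁ G₂ : Multigraph) (e₁ : G₁.E) (e₂ : G₂.E) : Multigraph where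
  V := G₁.V ⊕ G₂.V
  E := ({a : G₁.E // a ≠ e₁} ⊕ {b : G₂.E // b ≠ e₂}) ⊕ Bool
  fst := fun e => match e with
    | .inl (.inl a) => .inl (G₁.fst a.1)
    | .inl (.inr b) => .inr (G₂.fst b.1)
    | .inr false => .inl (G₁.fst e₁)
    | .inr true => .inl (G₁.snd e₁)
  snd := fun e => match e with
    | .inl (.inl a) => .inl (G₁.snd a.1)
    | .inl (.inr b) => .inr (G₂.snd b.1)
    | .inr false => .inr (G₂.fst e₂)
    | .inr true => .inr (G₂.snd e₂)

/-- The natural mapping `E(G₁) → E(G₁ ≡₂ G₂)`: identity on `E(G₁) \ {e₁}`,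
and `e₁` goes to the new edge `x₁x₂`. -/
def twoJoinMapL (G₁ G₂ : Multigraph) (e₁ : G₁.E) (e₂ : G₂.E) :
    G₁.E → (twoJoin G₁ G₂ e₁ e₂).E :=
  fun a => if h : a = e₁ then .inr false else .inl (.inl ⟨a, h⟩)

/-- The natural mapping `E(G₂) → E(G₁ ≡₂ G₂)`: identity on `E(G₂) \ {e₂}`,
and `e₂` goes to the new edge `x₁x₂`. -/
def twoJoinMapR (G₁ G₂ : Multigraph) (e₁ : G₁.E) (e₂ : G₂.E) :
    G₂.E → (twoJoin G₁ G₂ e₁ e₂).E :=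
  fun b => if h : b = e₂ then .inr false else .inl (.inr ⟨b, h⟩)

lemma ne_of_inc_eq_zero (G : Multigraph) {u : G.V} {e : G.E} (h : G.inc u e = 0) :
    G.fst e ≠ u ∧ G.snd e ≠ u := by
  unfold inc at h
  constructor <;> intro he <;> simp [he] at h

/-- The endpoint of `e` other than `u`. -/
def otherEnd (G : Multigraph) (u : G.V) (e : G.E) : G.V :=
  if G.fst e = u then G.snd e else G.fst e

lemma otherEnd_ne (G : Multigraph) {u : G.V} {e : G.E} (h : G.inc u e = 1) :
    G.otherEnd u e ≠ u := by
  unfold inc at h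
  unfold otherEnd
  split_ifs with hf
  · intro hs; rw [hf, hs] at h; simp at h
  · exact hf

/-- The 3-join of `G₁` and `G₂`: the degree-3 vertices `u₁`, `u₂` are deleted
(`aᵢ j`, `j = 0,1,2`, are the three edges at `uᵢ`, none of them a loop, and all other
edges avoid `uᵢ`), and three new matching edges (coded `Sum.inr j`) are added, the
`j`-th joining the other endpoint of `a₁ j` to the other endpoint of `a₂ j`. -/
def threeJoin (G₁ G₂ : Multigraph) (u₁ : G₁.V) (u₂ : G₂.V)
    (a₁ : Fin 3 → G₁.E) (a₂ : Fin 3 → G₂.E)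
    (h₁ : ∀ j, G₁.inc u₁ (a₁ j) = 1) (h₂ : ∀ j, G₂.inc u₂ (a₂ j) = 1)
    (hz₁ : ∀ e, (∀ j, e ≠ a₁ j) → G₁.inc u₁ e = 0)
    (hz₂ : ∀ e, (∀ j, e ≠ a₂ j) → G₂.inc u₂ e = 0) : Multigraph where
  V := {v : G₁.V // v ≠ u₁} ⊕ {v : G₂.V // v ≠ u₂}
  E := ({e : G₁.E // ∀ j, e ≠ a₁ j} ⊕ {e : G₂.E // ∀ j, e ≠ a₂ j}) ⊕ Fin 3
  fst := fun e => match e with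
    | .inl (.inl a) => .inl ⟨G₁.fst a.1, (ne_of_inc_eq_zero G₁ (hz₁ a.1 a.2)).1⟩
    | .inl (.inr b) => .inr ⟨G₂.fst b.1, (ne_of_inc_eq_zero G₂ (hz₂ b.1 b.2)).1⟩
    | .inr j => .inl ⟨G₁.otherEnd u₁ (a₁ j), otherEnd_ne G₁ (h₁ j)⟩
  snd := fun e => match e with
    | .inl (.inl a) => .inl ⟨G₁.snd a.1, (ne_of_inc_eq_zero G₁ (hz₁ a.1 a.2)).2⟩
    | .inl (.inr b) => .inr ⟨G₂.snd b.1, (ne_of_inc_eq_zero G₂ (hz₂ b.1 b.2)).2⟩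
    | .inr j => .inr ⟨G₂.otherEnd u₂ (a₂ j), otherEnd_ne G₂ (h₂ j)⟩

/-- The natural mapping `E(G₁) → E(G₁ ≡ G₂)`: identity on edges not incident with
`u₁`, and the edge `a₁ j` at `u₁` goes to the `j`-th added matching edge. -/
noncomputable def threeJoinMapL (G₁ G₂ : Multigraph) (u₁ : G₁.V) (u₂ : G₂.V)
    (a₁ : Fin 3 → G₁.E) (a₂ : Fin 3 → G₂.E)
    (h₁ : ∀ j, G₁.inc u₁ (a₁ j) = 1) (h₂ : ∀ j, G₂.inc u₂ (a₂ j) = 1)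
    (hz₁ : ∀ e, (∀ j, e ≠ a₁ j) → G₁.inc u₁ e = 0)
    (hz₂ : ∀ e, (∀ j, e ≠ a₂ j) → G₂.inc u₂ e = 0) :
    G₁.E → (threeJoin G₁ G₂ u₁ u₂ a₁ a₂ h₁ h₂ hz₁ hz₂).E :=
  fun e => if h : ∀ j, e ≠ a₁ j then .inl (.inl ⟨e, h⟩)
    else .inr (Classical.choose (by push_neg at h; exact h))

/-- The natural mapping `E(G₂) → E(G₁ ≡ G₂)`. -/
noncomputable def threeJoinMapR (G₁ G₂ : Multigraph) (u₁ : G₁.V) (u₂ : G₂.V)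
    (a₁ : Fin 3 → G₁.E) (a₂ : Fin 3 → G₂.E)
    (h₁ : ∀ j, G₁.inc u₁ (a₁ j) = 1) (h₂ : ∀ j, G₂.inc u₂ (a₂ j) = 1)
    (hz₁ : ∀ e, (∀ j, e ≠ a₁ j) → G₁.inc u₁ e = 0)
    (hz₂ : ∀ e, (∀ j, e ≠ a₂ j) → G₂.inc u₂ e = 0) :
    G₂.E → (threeJoin G₁ G₂ u₁ u₂ a₁ a₂ h₁ h₂ hz₁ hz₂).E :=
  fun e => if h : ∀ j, e ≠ a₂ j then .inl (.inr ⟨e, h⟩)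
    else .inr (Classical.choose (by push_neg at h; exact h))

/-- The set of edges of `H` to which an odd number of edges of `C ⊆ E(G)` map. -/
def oddImage (G H : Multigraph) (f : G.E → H.E) (C : Finset G.E) : Finset H.E :=
  Finset.univ.filter (fun e' => Odd ((C.filter (fun e => f e = e')).card))

section cycleContinuity

variable {G H K : Multigraph}

theorem CycleContinuous.comp {f : G.E → H.E} {g : H.E → K.E}
    (hg : CycleContinuous H K g) (hf : CycleContinuous G H f) :
    CycleContinuous G K (g ∘ f) := fun C hC => by
  simpa [preim] using hf _ (hg C hC)

theorem sum_inc (G : Multigraph) (e : G.E) : ∑ v, G.inc v e = 2 := by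
  simp [inc, Finset.sum_add_distrib]

theorem isCycle_of_forall_ne (u : G.V) {C : Finset G.E}
    (h : ∀ v, v ≠ u → Even (∑ e ∈ C, G.inc v e)) : G.IsCycle C := by
  have htotal : Even (∑ v, ∑ e ∈ C, G.inc v e) := by
    rw [Finset.sum_comm]
    simp [sum_inc]
  rw [Fintype.sum_eq_add_sum_compl u] at htotal
  have hrest : Even (∑ v ∈ {u}ᶜ, ∑ e ∈ C, G.inc v e) :=
    Finset.even_sum _ fun v hv => h v (by simpa using hv)
  intro v
  rcases eq_or_ne v u with rfl | hv
  · exact (Nat.even_add.mp htotal).mpr hrest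
  · exact h v hv

theorem inc_eq_ite_otherEnd {u v : G.V} {e : G.E} (hv : v ≠ u) (he : G.inc u e = 1) :
    G.inc v e = if G.otherEnd u e = v then 1 else 0 := by
  unfold inc otherEnd at *
  split_ifs at * <;> simp_all

theorem cycleContinuous_of_inc_eq (u : G.V) {f : G.E → H.E} (hf : Function.Injective f)
    (φ : {v // v ≠ u} → H.V) (hinc : ∀ v e, H.inc (φ v) (f e) = G.inc v e)
    (hout : ∀ v, ∀ e' ∉ Set.range f, H.inc (φ v) e' = 0) : CycleContinuous G H f := by
  intro C hC
  refine isCycle_of_forall_ne u fun v hv => ?_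
  have hsub : (preim f C).image f ⊆ C := by
    intro e' he'
    obtain ⟨e, he, rfl⟩ := Finset.mem_image.mp he'
    simpa [preim] using he
  have hrange : ∀ e' ∈ C, e' ∉ (preim f C).image f → H.inc (φ ⟨v, hv⟩) e' = 0 := by
    intro e' he' hnot
    refine hout _ e' ?_
    rintro ⟨e, rfl⟩
    exact hnot (Finset.mem_image_of_mem f (by simpa [preim] using he'))
  suffices ∑ e ∈ preim f C, G.inc v e = ∑ e' ∈ C, H.inc (φ ⟨v, hv⟩) e' from this ▸ hC _
  calc ∑ e ∈ preim f C, G.inc v e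
      = ∑ e ∈ preim f C, H.inc (φ ⟨v, hv⟩) (f e) := by simp only [hinc]
    _ = ∑ e' ∈ (preim f C).image f, H.inc (φ ⟨v, hv⟩) e' :=
        (Finset.sum_image fun _ _ _ _ h => hf h).symm
    _ = ∑ e' ∈ C, H.inc (φ ⟨v, hv⟩) e' := Finset.sum_subset hsub hrange

end cycleContinuity

noncomputable def extendStar {E X ι : Type} (a : ι → E) [DecidablePred fun e => ∀ k, e ≠ a k]
    (g : {e // ∀ k, e ≠ a k} → X) (e : E) : X ⊕ ι :=
  if h : ∀ k, e ≠ a k then .inl (g ⟨e, h⟩)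
  else .inr (Classical.choose (not_forall_not.mp h))

section extendStar

variable {E X ι : Type} {a : ι → E} [DecidablePred fun e => ∀ k, e ≠ a k]
  {g : {e // ∀ k, e ≠ a k} → X}

theorem extendStar_of_forall_ne {e : E} (h : ∀ k, e ≠ a k) :
    extendStar a g e = .inl (g ⟨e, h⟩) :=
  dif_pos h

theorem extendStar_apply (ha : Function.Injective a) (k : ι) : extendStar a g (a k) = .inr k := by
  have h : ¬ ∀ k', a k ≠ a k' := fun h => h k rfl
  have hex : ∃ k', a k = a k' := ⟨k, rfl⟩
  rw [extendStar, dif_neg h]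
  exact congrArg Sum.inr (ha (Classical.choose_spec hex)).symm

theorem extendStar_injective (ha : Function.Injective a) (hg : Function.Injective g) :
    Function.Injective (extendStar a g) := by
  intro e e' hee'
  by_cases h : ∀ k, e ≠ a k <;> by_cases h' : ∀ k, e' ≠ a k
  · rw [extendStar_of_forall_ne h, extendStar_of_forall_ne h'] at hee'
    simpa using hg (Sum.inl_injective hee')
  · obtain ⟨k', rfl⟩ : ∃ k', e' = a k' := by simpa using h'
    simp [extendStar_of_forall_ne h, extendStar_apply ha] at hee'
  · obtain ⟨k, rfl⟩ : ∃ k, e = a k := by simpa using h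
    simp [extendStar_of_forall_ne h', extendStar_apply ha] at hee'
  · obtain ⟨k, rfl⟩ : ∃ k, e = a k := by simpa using h
    obtain ⟨k', rfl⟩ : ∃ k', e' = a k' := by simpa using h'
    rw [extendStar_apply ha, extendStar_apply ha] at hee'
    rw [Sum.inr_injective hee']

theorem inl_mem_range_extendStar (x : {e // ∀ k, e ≠ a k}) :
    Sum.inl (g x) ∈ Set.range (extendStar a g) :=
  ⟨x, extendStar_of_forall_ne x.2⟩

theorem inr_mem_range_extendStar (ha : Function.Injective a) (k : ι) :
    Sum.inr k ∈ Set.range (extendStar a g) :=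
  ⟨a k, extendStar_apply ha k⟩

end extendStar

section threeJoin

variable (G₁ G₂ : Multigraph) (u₁ : G₁.V) (u₂ : G₂.V)
    (a₁ : Fin 3 → G₁.E) (a₂ : Fin 3 → G₂.E)
    (h₁ : ∀ j, G₁.inc u₁ (a₁ j) = 1) (h₂ : ∀ j, G₂.inc u₂ (a₂ j) = 1)
    (hz₁ : ∀ e, (∀ j, e ≠ a₁ j) → G₁.inc u₁ e = 0)
    (hz₂ : ∀ e, (∀ j, e ≠ a₂ j) → G₂.inc u₂ e = 0)

local notation "J" => threeJoin G₁ G₂ u₁ u₂ a₁ a₂ h₁ h₂ hz₁ hz₂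

theorem threeJoinMapL_eq_extendStar :
    threeJoinMapL G₁ G₂ u₁ u₂ a₁ a₂ h₁ h₂ hz₁ hz₂ = extendStar a₁
      (X := {e : G₁.E // ∀ j, e ≠ a₁ j} ⊕ {e : G₂.E // ∀ j, e ≠ a₂ j}) Sum.inl :=
  rfl

theorem threeJoinMapR_eq_extendStar :
    threeJoinMapR G₁ G₂ u₁ u₂ a₁ a₂ h₁ h₂ hz₁ hz₂ = extendStar a₂
      (X := {e : G₁.E // ∀ j, e ≠ a₁ j} ⊕ {e : G₂.E // ∀ j, e ≠ a₂ j}) Sum.inr :=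
  rfl

theorem cycleContinuous_threeJoinMapL (ha₁ : Function.Injective a₁) :
    CycleContinuous G₁ (J) (threeJoinMapL G₁ G₂ u₁ u₂ a₁ a₂ h₁ h₂ hz₁ hz₂) := by
  rw [threeJoinMapL_eq_extendStar]
  refine cycleContinuous_of_inc_eq u₁
    (extendStar_injective ha₁ Sum.inl_injective) Sum.inl ?_ ?_
  · intro v e
    by_cases h : ∀ j, e ≠ a₁ j
    · simp [extendStar_of_forall_ne h, inc, threeJoin, Subtype.ext_iff]
    · obtain ⟨j, rfl⟩ : ∃ j, e = a₁ j := by simpa using h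
      rw [extendStar_apply ha₁, inc_eq_ite_otherEnd v.2 (h₁ j)]
      simp [inc, threeJoin, Subtype.ext_iff]
  · rintro v ((x | y) | j) hrange
    · exact absurd (inl_mem_range_extendStar x) hrange
    · simp [inc, threeJoin]
    · exact absurd (inr_mem_range_extendStar ha₁ j) hrange

theorem cycleContinuous_threeJoinMapR (ha₂ : Function.Injective a₂) :
    CycleContinuous G₂ (J) (threeJoinMapR G₁ G₂ u₁ u₂ a₁ a₂ h₁ h₂ hz₁ hz₂) := by
  rw [threeJoinMapR_eq_extendStar]
  refine cycleContinuous_of_inc_eq u₂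
    (extendStar_injective ha₂ Sum.inr_injective) Sum.inr ?_ ?_
  · intro v e
    by_cases h : ∀ j, e ≠ a₂ j
    · simp [extendStar_of_forall_ne h, inc, threeJoin, Subtype.ext_iff]
    · obtain ⟨j, rfl⟩ : ∃ j, e = a₂ j := by simpa using h
      rw [extendStar_apply ha₂, inc_eq_ite_otherEnd v.2 (h₂ j)]
      simp [inc, threeJoin, Subtype.ext_iff]
  · rintro v ((x | y) | j) hrange
    · simp [inc, threeJoin]
    · exact absurd (inl_mem_range_extendStar (g := Sum.inr) y) hrange
    · exact absurd (inr_mem_range_extendStar ha₂ j) hrange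

end threeJoin

end Multigraph

open Multigraph in
theorem threeJoin_incomparable_general (G₁ G₂ : Multigraph) (u₁ : G₁.V) (u₂ : G₂.V)
    (a₁ : Fin 3 → G₁.E) (a₂ : Fin 3 → G₂.E)
    (ha₁ : Function.Injective a₁) (ha₂ : Function.Injective a₂)
    (h₁ : ∀ j, G₁.inc u₁ (a₁ j) = 1) (h₂ : ∀ j, G₂.inc u₂ (a₂ j) = 1)
    (hz₁ : ∀ e, (∀ j, e ≠ a₁ j) → G₁.inc u₁ e = 0)
    (hz₂ : ∀ e, (∀ j, e ≠ a₂ j) → G₂.inc u₂ e = 0)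
    (hinc₁ : ¬ ∃ f : G₁.E → G₂.E, CycleContinuous G₁ G₂ f)
    (hinc₂ : ¬ ∃ f : G₂.E → G₁.E, CycleContinuous G₂ G₁ f) :
    (¬ ∃ g : (threeJoin G₁ G₂ u₁ u₂ a₁ a₂ h₁ h₂ hz₁ hz₂).E → G₁.E,
        CycleContinuous (threeJoin G₁ G₂ u₁ u₂ a₁ a₂ h₁ h₂ hz₁ hz₂) G₁ g) ∧
    (¬ ∃ g : (threeJoin G₁ G₂ u₁ u₂ a₁ a₂ h₁ h₂ hz₁ hz₂).E → G₂.E,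
        CycleContinuous (threeJoin G₁ G₂ u₁ u₂ a₁ a₂ h₁ h₂ hz₁ hz₂) G₂ g) := by
  constructor
  · rintro ⟨g, hg⟩
    exact hinc₂ ⟨_, hg.comp (cycleContinuous_threeJoinMapR G₁ G₂ u₁ u₂ a₁ a₂ h₁ h₂ hz₁ hz₂ ha₂)⟩
  · rintro ⟨g, hg⟩
    exact hinc₁ ⟨_, hg.comp (cycleContinuous_threeJoinMapL G₁ G₂ u₁ u₂ a₁ a₂ h₁ h₂ hz₁ hz₂ ha₁)⟩

open Multigraph in
/-- if `G₁`, `G₂` are cc-incomparable snarks, then their 3-join has no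
cycle-continuous mapping to either of them. -/
theorem threeJoin_incomparable (G₁ G₂ : Multigraph) (u₁ : G₁.V) (u₂ : G₂.V)
    (a₁ : Fin 3 → G₁.E) (a₂ : Fin 3 → G₂.E)
    (ha₁ : Function.Injective a₁) (ha₂ : Function.Injective a₂)
    (h₁ : ∀ j, G₁.inc u₁ (a₁ j) = 1) (h₂ : ∀ j, G₂.inc u₂ (a₂ j) = 1)
    (hz₁ : ∀ e, (∀ j, e ≠ a₁ j) → G₁.inc u₁ e = 0)
    (hz₂ : ∀ e, (∀ j, e ≠ a₂ j) → G₂.inc u₂ e = 0)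
    (hn₁ : Function.Injective (fun j => G₁.otherEnd u₁ (a₁ j)))
    (hn₂ : Function.Injective (fun j => G₂.otherEnd u₂ (a₂ j)))
    (hs₁ : IsSnark G₁) (hs₂ : IsSnark G₂)
    (hinc₁ : ¬ ∃ f : G₁.E → G₂.E, CycleContinuous G₁ G₂ f)
    (hinc₂ : ¬ ∃ f : G₂.E → G₁.E, CycleContinuous G₂ G₁ f) :
    (¬ ∃ g : (threeJoin G₁ G₂ u₁ u₂ a₁ a₂ h₁ h₂ hz₁ hz₂).E → G₁.E,
        CycleContinuous (threeJoin G₁ G₂ u₁ u₂ a₁ a₂ h₁ h₂ hz₁ hz₂) G₁ g) ∧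
    (¬ ∃ g : (threeJoin G₁ G₂ u₁ u₂ a₁ a₂ h₁ h₂ hz₁ hz₂).E → G₂.E,
        CycleContinuous (threeJoin G₁ G₂ u₁ u₂ a₁ a₂ h₁ h₂ hz₁ hz₂) G₂ g) :=
  threeJoin_incomparable_general G₁ G₂ u₁ u₂ a₁ a₂ ha₁ ha₂ h₁ h₂ hz₁ hz₂ hinc₁ hinc₂
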